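/- arXiv:2308.08332 — 2 statements merged into one kernel-verified Lean document; each statement's English description precedes it below -/
import Mathlib

section
/- (Maximum Asymptotic Limit for S.) Suppose S, E, I_1, …, I_N : ℝ → ℝ are differentiable, satisfy the SEIR system with N parallel infectious stages for all t ≥ t₀, and S(t), E(t), I_i(t) ≥ 0 for all t ≥ t₀. If U(t₀) = E(t₀) + S* Σ_i (β_i/γ_i) I_i(t₀) > 0 and S(t₀) > S*, then there exists S_∞ with S(t) → S_∞ as t → ∞ and S_∞ < S*; moreover E(t) → 0 and I_i(t) → 0 as t → ∞ for every i = 1, …, N. -/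
/-!
`S` is nonincreasing and nonnegative, so it converges; since `(S + E)' = -σE` and
`(-S)' = (Σ βᵢIᵢ) S ≥ 0` also converge, `E` and each `Iᵢ` are driven by a nonnegative input with
finite total mass and a linear damping term, which forces them to `0`. The Lyapunov function
`U = E + S* Σ (βᵢ/γᵢ) Iᵢ` satisfies `U' = (S - S*) Σ βᵢIᵢ`, and `U → 0`. Were `S ≥ S*` forever,
`U` would be nondecreasing from `U(t₀) > 0`; so `S` drops strictly below `S*` at some time, and
then stays below.
-/

open Filter Set Topology Finset

section Monotonicity

variable {f f' : ℝ → ℝ} {t₀ L : ℝ}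

lemma monotoneOn_Ici_of_hasDerivAt_nonneg (hf : ∀ t ≥ t₀, HasDerivAt f (f' t) t)
    (hf' : ∀ t ≥ t₀, 0 ≤ f' t) : MonotoneOn f (Ici t₀) :=
  monotoneOn_of_hasDerivWithinAt_nonneg (convex_Ici t₀)
    (fun t ht => (hf t ht).continuousAt.continuousWithinAt)
    (fun t ht => (hf t (interior_subset ht)).hasDerivWithinAt)
    (fun t ht => hf' t (interior_subset ht))

lemma antitoneOn_Ici_of_hasDerivAt_nonpos (hf : ∀ t ≥ t₀, HasDerivAt f (f' t) t)
    (hf' : ∀ t ≥ t₀, f' t ≤ 0) : AntitoneOn f (Ici t₀) :=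
  antitoneOn_of_hasDerivWithinAt_nonpos (convex_Ici t₀)
    (fun t ht => (hf t ht).continuousAt.continuousWithinAt)
    (fun t ht => (hf t (interior_subset ht)).hasDerivWithinAt)
    (fun t ht => hf' t (interior_subset ht))

lemma MonotoneOn.le_of_tendsto_Ici (hf : MonotoneOn f (Ici t₀))
    (hL : Tendsto f atTop (𝓝 L)) {t : ℝ} (ht : t₀ ≤ t) : f t ≤ L :=
  ge_of_tendsto hL <| (eventually_ge_atTop t).mono fun _ hs =>
    hf (mem_Ici.2 ht) (mem_Ici.2 (ht.trans hs)) hs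

lemma AntitoneOn.le_of_tendsto_Ici (hf : AntitoneOn f (Ici t₀))
    (hL : Tendsto f atTop (𝓝 L)) {t : ℝ} (ht : t₀ ≤ t) : L ≤ f t :=
  le_of_tendsto hL <| (eventually_ge_atTop t).mono fun _ hs =>
    hf (mem_Ici.2 ht) (mem_Ici.2 (ht.trans hs)) hs

lemma AntitoneOn.exists_tendsto_Ici {m : ℝ} (hf : AntitoneOn f (Ici t₀))
    (hm : ∀ t ≥ t₀, m ≤ f t) : ∃ L, Tendsto f atTop (𝓝 L) := by
  have hanti : Antitone fun t => f (max t t₀) := fun s t hst =>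
    hf (mem_Ici.2 (le_max_right s t₀)) (mem_Ici.2 (le_max_right t t₀))
      (max_le_max_right t₀ hst)
  have hbdd : BddBelow (range fun t => f (max t t₀)) := ⟨m, by
    rintro _ ⟨t, rfl⟩
    exact hm _ (le_max_right t t₀)⟩
  refine ⟨_, (tendsto_atTop_ciInf hanti hbdd).congr' ?_⟩
  filter_upwards [eventually_ge_atTop t₀] with t ht
  rw [max_eq_left ht]

end Monotonicity

section Decay

variable {f g G : ℝ → ℝ} {c : ℝ}

lemma le_exp_mul_add_sub_of_hasDerivAt {T : ℝ} (hc : 0 ≤ c)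
    (hf : ∀ t ≥ T, HasDerivAt f (g t - c * f t) t) (hG : ∀ t ≥ T, HasDerivAt G (g t) t)
    (hg : ∀ t ≥ T, 0 ≤ g t) {t : ℝ} (ht : T ≤ t) :
    f t ≤ Real.exp (-(c * (t - T))) * f T + (G t - G T) := by
  have hGmono := monotoneOn_Ici_of_hasDerivAt_nonneg hG hg
  -- variation of constants: `h' = -c e^{c(s - T)} (G s - G T) ≤ 0`
  let h : ℝ → ℝ := fun s => Real.exp (c * (s - T)) * (f s - (G s - G T))
  have hanti : AntitoneOn h (Ici T) := by
    refine antitoneOn_Ici_of_hasDerivAt_nonpos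
      (f' := fun s => -(c * Real.exp (c * (s - T)) * (G s - G T)))
      (fun s hs => ?_) (fun s hs => ?_)
    · have hexp : HasDerivAt (fun s => Real.exp (c * (s - T))) (c * Real.exp (c * (s - T))) s := by
        simpa [mul_comm] using (((hasDerivAt_id s).sub_const T).const_mul c).exp
      exact (hexp.fun_mul ((hf s hs).fun_sub ((hG s hs).sub_const (G T)))).congr_deriv
        (by ring)
    · have : G T ≤ G s := hGmono self_mem_Ici (mem_Ici.2 hs) hs
      exact neg_nonpos.2 (by positivity)
  have hle : h t ≤ f T := by simpa [h] using hanti self_mem_Ici (mem_Ici.2 ht) ht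
  have hsplit : Real.exp (-(c * (t - T))) * Real.exp (c * (t - T)) = 1 := by
    rw [← Real.exp_add, neg_add_cancel, Real.exp_zero]
  have := mul_le_mul_of_nonneg_left hle (Real.exp_pos (-(c * (t - T)))).le
  rw [← mul_assoc, hsplit, one_mul] at this
  linarith

lemma tendsto_zero_of_hasDerivAt_sub_mul_self {t₀ L : ℝ} (hc : 0 < c)
    (hf : ∀ t ≥ t₀, HasDerivAt f (g t - c * f t) t) (hG : ∀ t ≥ t₀, HasDerivAt G (g t) t)
    (hf₀ : ∀ t ≥ t₀, 0 ≤ f t) (hg : ∀ t ≥ t₀, 0 ≤ g t) (hGL : Tendsto G atTop (𝓝 L)) :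
    Tendsto f atTop (𝓝 0) := by
  refine tendsto_order.2 ⟨fun a ha => (eventually_ge_atTop t₀).mono fun t ht =>
    ha.trans_le (hf₀ t ht), fun ε hε => ?_⟩
  obtain ⟨T, hT, hGT⟩ : ∃ T ≥ t₀, L - ε < G T :=
    ((eventually_ge_atTop t₀).and (hGL.eventually (eventually_gt_nhds (by linarith)))).exists
  have hbound : Tendsto (fun t => Real.exp (-(c * (t - T))) * f T + (G t - G T)) atTop
      (𝓝 (0 * f T + (L - G T))) := by
    have hlin : Tendsto (fun t => c * (t - T)) atTop atTop :=
      (tendsto_atTop_add_const_right _ (-T) tendsto_id).const_mul_atTop hc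
    exact ((Real.tendsto_exp_neg_atTop_nhds_zero.comp hlin).mul_const _).add
      (hGL.sub_const _)
  filter_upwards [eventually_ge_atTop T,
    hbound.eventually (eventually_lt_nhds (b := ε) (by linarith))] with t ht hlt
  have := le_exp_mul_add_sub_of_hasDerivAt hc.le (fun s hs => hf s (hT.trans hs))
    (fun s hs => hG s (hT.trans hs)) (fun s hs => hg s (hT.trans hs)) ht
  linarith

end Decay

lemma exists_lt_of_hasDerivAt_sub_mul {U S b : ℝ → ℝ} {c t₀ : ℝ}
    (hU : ∀ t ≥ t₀, HasDerivAt U ((S t - c) * b t) t) (hb : ∀ t ≥ t₀, 0 ≤ b t)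
    (hU₀ : 0 < U t₀) (hUlim : Tendsto U atTop (𝓝 0)) : ∃ t ≥ t₀, S t < c := by
  by_contra! hS
  have := (monotoneOn_Ici_of_hasDerivAt_nonneg hU fun t ht =>
    mul_nonneg (sub_nonneg.2 (hS t ht)) (hb t ht)).le_of_tendsto_Ici hUlim le_rfl
  linarith

lemma hasDerivAt_seir_lyapunov {N : ℕ} {σ Sstar t : ℝ} {γ β x : Fin N → ℝ} {S E : ℝ → ℝ}
    {I : Fin N → ℝ → ℝ} (hγ : ∀ i, γ i ≠ 0) (hSstar : Sstar * ∑ i, x i * β i / γ i = 1)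
    (hE : HasDerivAt E ((∑ i, β i * I i t) * S t - σ * E t) t)
    (hI : ∀ i, HasDerivAt (I i) (x i * σ * E t - γ i * I i t) t) :
    HasDerivAt (fun t => E t + Sstar * ∑ i, β i / γ i * I i t)
      ((S t - Sstar) * ∑ i, β i * I i t) t := by
  refine (hE.add ((HasDerivAt.fun_sum fun i _ => (hI i).const_mul (β i / γ i)).const_mul
    Sstar)).congr_deriv ?_
  have hterm : ∀ i, β i / γ i * (x i * σ * E t - γ i * I i t)
      = x i * β i / γ i * (σ * E t) - β i * I i t := fun i => by
    field_simp [hγ i]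
  simp only [hterm, sum_sub_distrib, ← sum_mul]
  linear_combination σ * E t * hSstar

theorem stmt_6_general
    (N : ℕ) [NeZero N]
    (σ : ℝ) (hσ : 0 < σ)
    (γ β x : Fin N → ℝ)
    (hγ : ∀ i, 0 < γ i) (hβ : ∀ i, 0 < β i) (hx : ∀ i, 0 < x i)
    (Sstar : ℝ) (hSstar : Sstar = (∑ i, x i * β i / γ i)⁻¹)
    (S E : ℝ → ℝ) (I : Fin N → ℝ → ℝ) (t₀ : ℝ)
    (hS : ∀ t ≥ t₀, HasDerivAt S (-(∑ i, β i * I i t) * S t) t)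
    (hE : ∀ t ≥ t₀, HasDerivAt E ((∑ i, β i * I i t) * S t - σ * E t) t)
    (hI : ∀ i, ∀ t ≥ t₀, HasDerivAt (I i) (x i * σ * E t - γ i * I i t) t)
    (hSnn : ∀ t ≥ t₀, 0 ≤ S t) (hEnn : ∀ t ≥ t₀, 0 ≤ E t)
    (hInn : ∀ i, ∀ t ≥ t₀, 0 ≤ I i t)
    (hU0 : 0 < E t₀ + Sstar * ∑ i, β i / γ i * I i t₀) :
    (∃ Sinf : ℝ, Tendsto S atTop (nhds Sinf) ∧ Sinf < Sstar) ∧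
    Tendsto E atTop (nhds 0) ∧ ∀ i, Tendsto (I i) atTop (nhds 0) := by
  have hinc : ∀ t ≥ t₀, 0 ≤ (∑ i, β i * I i t) * S t := fun t ht =>
    mul_nonneg (sum_nonneg fun i _ => mul_nonneg (hβ i).le (hInn i t ht)) (hSnn t ht)
  have hSanti := antitoneOn_Ici_of_hasDerivAt_nonpos hS fun t ht => by linarith [hinc t ht]
  obtain ⟨Sinf, hSlim⟩ := hSanti.exists_tendsto_Ici hSnn
  have hSE : ∀ t ≥ t₀, HasDerivAt (fun t => S t + E t) (-(σ * E t)) t := fun t ht =>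
    ((hS t ht).add (hE t ht)).congr_deriv (by ring)
  obtain ⟨L, hSElim⟩ := (antitoneOn_Ici_of_hasDerivAt_nonpos hSE fun t ht =>
    neg_nonpos.2 (mul_nonneg hσ.le (hEnn t ht))).exists_tendsto_Ici fun t ht =>
      add_nonneg (hSnn t ht) (hEnn t ht)
  have hElim : Tendsto E atTop (𝓝 0) := tendsto_zero_of_hasDerivAt_sub_mul_self hσ hE
    (fun t ht => (hS t ht).neg.congr_deriv (by ring)) hEnn hinc hSlim.neg
  have hIlim : ∀ i, Tendsto (I i) atTop (𝓝 0) := fun i =>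
    tendsto_zero_of_hasDerivAt_sub_mul_self (hγ i) (hI i)
      (fun t ht => ((hSE t ht).const_mul (-x i)).congr_deriv (by ring)) (hInn i)
      (fun t ht => by have := hEnn t ht; have := hx i; positivity) (hSElim.const_mul (-x i))
  have hSstar' : Sstar * ∑ i, x i * β i / γ i = 1 := hSstar ▸ inv_mul_cancel₀ (sum_pos
    (fun i _ => by have := hγ i; have := hβ i; have := hx i; positivity) univ_nonempty).ne'
  have hUlim : Tendsto (fun t => E t + Sstar * ∑ i, β i / γ i * I i t) atTop (𝓝 0) := by
    simpa using hElim.add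
      ((tendsto_finsetSum _ fun i _ => (hIlim i).const_mul (β i / γ i)).const_mul Sstar)
  obtain ⟨t₁, ht₁, hSt₁⟩ := exists_lt_of_hasDerivAt_sub_mul
    (fun t ht =>
      hasDerivAt_seir_lyapunov (fun i => (hγ i).ne') hSstar' (hE t ht) (hI · t ht))
    (fun t ht => sum_nonneg fun i _ => mul_nonneg (hβ i).le (hInn i t ht)) hU0 hUlim
  exact ⟨⟨Sinf, hSlim, (hSanti.le_of_tendsto_Ici hSlim ht₁).trans_lt hSt₁⟩, hElim, hIlim⟩

/-- Maximum Asymptotic Limit for `S`: if `U(t₀) > 0` and `S(t₀) > S*`,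
then `S(t)` converges as `t → ∞` to a limit `S_∞ < S*`, and `E(t) → 0`,
`Iᵢ(t) → 0` for every `i`. -/
theorem stmt_6
    (N : ℕ) [NeZero N]
    (σ : ℝ) (hσ : 0 < σ)
    (γ β x : Fin N → ℝ)
    (hγ : ∀ i, 0 < γ i) (hβ : ∀ i, 0 < β i) (hx : ∀ i, 0 < x i)
    (hxsum : ∑ i, x i = 1)
    (Sstar : ℝ) (hSstar : Sstar = (∑ i, x i * β i / γ i)⁻¹)
    (S E : ℝ → ℝ) (I : Fin N → ℝ → ℝ) (t₀ : ℝ)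
    (hS : ∀ t ≥ t₀, HasDerivAt S (-(∑ i, β i * I i t) * S t) t)
    (hE : ∀ t ≥ t₀, HasDerivAt E ((∑ i, β i * I i t) * S t - σ * E t) t)
    (hI : ∀ i, ∀ t ≥ t₀, HasDerivAt (I i) (x i * σ * E t - γ i * I i t) t)
    (hSnn : ∀ t ≥ t₀, 0 ≤ S t) (hEnn : ∀ t ≥ t₀, 0 ≤ E t)
    (hInn : ∀ i, ∀ t ≥ t₀, 0 ≤ I i t)
    (hU0 : 0 < E t₀ + Sstar * ∑ i, β i / γ i * I i t₀)
    (hS0 : Sstar < S t₀) :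
    (∃ Sinf : ℝ, Tendsto S atTop (nhds Sinf) ∧ Sinf < Sstar) ∧
    Tendsto E atTop (nhds 0) ∧ ∀ i, Tendsto (I i) atTop (nhds 0) :=
  stmt_6_general N σ hσ γ β x hγ hβ hx Sstar hSstar S E I t₀ hS hE hI hSnn hEnn hInn hU0
end

section
/- (Componentwise comparison of SEIR solutions with the frozen linear flow.) Let S₀ ∈ ℝ and suppose S, E, I_1, …, I_N : ℝ → ℝ are differentiable, nonnegative, satisfy the SEIR system with N parallel infectious stages for all t ≥ t₀, and S(t) ≤ S₀ for all t ≥ t₀. Let V(t) = (E(t), I_1(t), …, I_N(t)) ∈ ℝ^{N+1}. Then for every t ≥ t₀, V(t) ≤ exp((t − t₀) L₀(S₀)) V(t₀) componentwise. -/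
/-
A Metzler matrix `A` (nonnegative off the diagonal) has an entrywise nonnegative exponential:
`A + c • 1` is nonnegative for large `c`, its exponential series has nonnegative terms, and
`exp A = exp (-c) • exp (A + c • 1)`. Because `S ≤ S₀`, `γmin ≤ γᵢ` and `Iᵢ ≥ 0`, the vector
`V = (E, I₁, …, I_N)` satisfies `V' ≤ L₀(S₀) V` componentwise, and `L₀(S₀)` is Metzler. Hence
`u ↦ exp ((t - u) L₀(S₀)) V(u)`, whose derivative is `exp ((t - u) L₀(S₀)) (V' - L₀(S₀) V) ≤ 0`,
is antitone on `[t₀, t]`; comparing its values at `t` and `t₀` gives the claim.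
-/

open NormedSpace

/-- The `(N+1) × (N+1)` matrix `L₀(S₀)` of the frozen linearization: first row
`(−σ, β₁S₀, …, β_N S₀)`, first column `(−σ, x₁σ, …, x_N σ)ᵗ`, remaining diagonal
entries `−γ` (with `γ = minᵢ γᵢ`), all other entries `0`. -/
noncomputable def L0 (N : ℕ) (σ γ : ℝ) (β x : Fin N → ℝ) (S : ℝ) :
    Matrix (Fin (N + 1)) (Fin (N + 1)) ℝ :=
  Matrix.of fun i j =>
    Fin.cases
      (Fin.cases (-σ) (fun k => β k * S) j)
      (fun k => Fin.cases (x k * σ) (fun l => if k = l then -γ else 0) j)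
      i

open Set Matrix

namespace Matrix

variable {ι : Type*} [Fintype ι] [DecidableEq ι]

theorem exp_apply_nonneg {M : Matrix ι ι ℝ} (hM : ∀ i j, 0 ≤ M i j) (i j : ι) :
    0 ≤ exp M i j := by
  open scoped Norms.Operator in
  have hsum := exp_series_hasSum_exp' (𝕂 := ℝ) M
  exact (Pi.hasSum.1 (Pi.hasSum.1 hsum i) j).nonneg fun n =>
    mul_nonneg (by positivity) (pow_apply_nonneg hM n i j)

theorem exp_smul_one (c : ℝ) : exp (c • (1 : Matrix ι ι ℝ)) = Real.exp c • 1 := by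
  rw [smul_one_eq_diagonal, exp_diagonal, Pi.exp_def, smul_one_eq_diagonal, Real.exp_eq_exp_ℝ]

theorem exp_apply_nonneg_of_offDiag_nonneg {A : Matrix ι ι ℝ}
    (hA : ∀ i j, i ≠ j → 0 ≤ A i j) (i j : ι) : 0 ≤ exp A i j := by
  set c : ℝ := ∑ k, |A k k|
  have hshift : 0 ≤ exp (A + c • 1) i j := by
    refine exp_apply_nonneg (fun k l => ?_) i j
    rcases eq_or_ne k l with rfl | hkl
    · have : |A k k| ≤ c :=
        Finset.single_le_sum (fun k _ => abs_nonneg (A k k)) (Finset.mem_univ k)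
      simp only [add_apply, smul_apply, one_apply_eq, smul_eq_mul, mul_one]
      linarith [neg_abs_le (A k k)]
    · simpa [one_apply_ne hkl] using hA k l hkl
  have hcomm : Commute (A + c • 1) ((-c) • 1) := (Commute.one_right _).smul_right _
  have hexp : exp A = Real.exp (-c) • exp (A + c • 1) := by
    conv_lhs => rw [show A = A + c • 1 + (-c) • 1 by module]
    rw [exp_add_of_commute _ _ hcomm, exp_smul_one, mul_smul_comm, mul_one]
  rw [hexp, smul_apply, smul_eq_mul]
  exact mul_nonneg (Real.exp_pos _).le hshift

open scoped Norms.Operator in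
theorem hasDerivAt_exp_sub_smul_mulVec (A : Matrix ι ι ℝ) {V : ℝ → ι → ℝ} {V' : ι → ℝ}
    {t s : ℝ} (hV : HasDerivAt V V' s) :
    HasDerivAt (fun u => exp ((t - u) • A) *ᵥ V u) (exp ((t - s) • A) *ᵥ (V' - A *ᵥ V s)) s := by
  have hexp : HasDerivAt (fun u : ℝ => exp ((t - u) • A)) (-(exp ((t - s) • A) * A)) s := by
    have h := (hasDerivAt_exp_smul_const A (t - s)).scomp s ((hasDerivAt_id s).const_sub t)
    rw [neg_one_smul] at h
    exact h
  have hprod := (mulVecBilin ℝ ℝ).toContinuousBilinearMap.hasDerivAt_of_bilinear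
    (fun _ => hexp) (fun _ => hV)
  refine hprod.congr_deriv ?_
  change exp ((t - s) • A) *ᵥ V' + (-(exp ((t - s) • A) * A)) *ᵥ V s = _
  rw [mulVec_sub, neg_mulVec, ← mulVec_mulVec, ← sub_eq_add_neg]

theorem le_exp_smul_mulVec_of_hasDerivAt_le {A : Matrix ι ι ℝ}
    (hA : ∀ i j, i ≠ j → 0 ≤ A i j) {V V' : ℝ → ι → ℝ} {t₀ t : ℝ} (ht : t₀ ≤ t)
    (hV : ∀ s ∈ Icc t₀ t, HasDerivAt V (V' s) s) (hle : ∀ s ∈ Icc t₀ t, V' s ≤ A *ᵥ V s) :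
    V t ≤ exp ((t - t₀) • A) *ᵥ V t₀ := by
  intro j
  have hderiv (s : ℝ) (hs : s ∈ Icc t₀ t) :
      HasDerivAt (fun u => (exp ((t - u) • A) *ᵥ V u) j)
        ((exp ((t - s) • A) *ᵥ (V' s - A *ᵥ V s)) j) s :=
    hasDerivAt_pi.1 (hasDerivAt_exp_sub_smul_mulVec A (hV s hs)) j
  have hanti : AntitoneOn (fun u => (exp ((t - u) • A) *ᵥ V u) j) (Icc t₀ t) := by
    refine antitoneOn_of_hasDerivWithinAt_nonpos (convex_Icc t₀ t)
      (fun s hs => (hderiv s hs).continuousAt.continuousWithinAt)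
      (fun s hs => (hderiv s (interior_subset hs)).hasDerivWithinAt) fun s hs => ?_
    obtain ⟨hs, hst⟩ := interior_subset hs
    refine Finset.sum_nonpos fun k _ => mul_nonpos_of_nonneg_of_nonpos ?_ ?_
    · exact exp_apply_nonneg_of_offDiag_nonneg
        (fun i j hij => smul_nonneg (sub_nonneg.2 hst) (hA i j hij)) j k
    · exact sub_nonpos.2 (hle s ⟨hs, hst⟩ k)
  simpa using hanti (left_mem_Icc.2 ht) (right_mem_Icc.2 ht) ht

end Matrix

section L0

variable {N : ℕ} {σ γ S : ℝ} {β x : Fin N → ℝ}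

theorem L0_offDiag_nonneg (hσ : 0 ≤ σ) (hβ : ∀ i, 0 ≤ β i) (hx : ∀ i, 0 ≤ x i) (hS : 0 ≤ S)
    (i j : Fin (N + 1)) (hij : i ≠ j) : 0 ≤ L0 N σ γ β x S i j := by
  cases i using Fin.cases <;> cases j using Fin.cases
  · exact absurd rfl hij
  · exact mul_nonneg (hβ _) hS
  · exact mul_nonneg (hx _) hσ
  · simp_all [L0]

theorem L0_mulVec_cons_zero (e : ℝ) (v : Fin N → ℝ) :
    (L0 N σ γ β x S *ᵥ Fin.cons e v) 0 = -σ * e + ∑ i, β i * S * v i := by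
  simp [L0, mulVec, dotProduct, Fin.sum_univ_succ]

theorem L0_mulVec_cons_succ (e : ℝ) (v : Fin N → ℝ) (k : Fin N) :
    (L0 N σ γ β x S *ᵥ Fin.cons e v) k.succ = x k * σ * e - γ * v k := by
  simp only [mulVec, dotProduct, L0, of_apply, Fin.cases_succ, Fin.sum_univ_succ, Fin.cases_zero,
    Fin.cons_zero, Fin.cons_succ, ite_mul, neg_mul, zero_mul, Finset.sum_ite_eq, Finset.mem_univ,
    if_true]
  ring

end L0

theorem seir_rhs_le_L0_mulVec {N : ℕ} {σ γmin S S₀ e : ℝ} {γ β x v : Fin N → ℝ}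
    (hβ : ∀ i, 0 ≤ β i) (hγ : ∀ i, γmin ≤ γ i) (hv : ∀ i, 0 ≤ v i) (hS : S ≤ S₀) :
    (Fin.cons ((∑ i, β i * v i) * S - σ * e) (fun i => x i * σ * e - γ i * v i) : Fin (N + 1) → ℝ)
      ≤ L0 N σ γmin β x S₀ *ᵥ Fin.cons e v := by
  intro k
  cases k using Fin.cases with
  | zero =>
    rw [L0_mulVec_cons_zero, Fin.cons_zero, Finset.sum_mul]
    have : ∑ i, β i * v i * S ≤ ∑ i, β i * S₀ * v i := Finset.sum_le_sum fun i _ => by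
      nlinarith [mul_nonneg (hβ i) (hv i)]
    linarith
  | succ k =>
    rw [L0_mulVec_cons_succ, Fin.cons_succ]
    nlinarith [mul_le_mul_of_nonneg_right (hγ k) (hv k)]

theorem stmt_19_general
    (N : ℕ) [NeZero N]
    (σ : ℝ) (hσ : 0 < σ)
    (γ β x : Fin N → ℝ)
    (hβ : ∀ i, 0 < β i) (hx : ∀ i, 0 < x i)
    (γmin : ℝ) (hγmin : γmin = Finset.univ.inf' Finset.univ_nonempty γ)
    (S₀ : ℝ)
    (S E : ℝ → ℝ) (I : Fin N → ℝ → ℝ) (t₀ : ℝ)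
    (hE : ∀ t ≥ t₀, HasDerivAt E ((∑ i, β i * I i t) * S t - σ * E t) t)
    (hI : ∀ i, ∀ t ≥ t₀, HasDerivAt (I i) (x i * σ * E t - γ i * I i t) t)
    (hSnn : ∀ t ≥ t₀, 0 ≤ S t)
    (hInn : ∀ i, ∀ t ≥ t₀, 0 ≤ I i t)
    (hSle : ∀ t ≥ t₀, S t ≤ S₀) :
    ∀ t ≥ t₀, ∀ j : Fin (N + 1),
      (Fin.cons (E t) (fun i => I i t) : Fin (N + 1) → ℝ) j
        ≤ (exp ((t - t₀) • L0 N σ γmin β x S₀)).mulVec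
            (Fin.cons (E t₀) (fun i => I i t₀) : Fin (N + 1) → ℝ) j := by
  intro t ht
  have hS₀ : 0 ≤ S₀ := (hSnn t₀ le_rfl).trans (hSle t₀ le_rfl)
  have hγmin_le (i : Fin N) : γmin ≤ γ i := hγmin ▸ Finset.inf'_le _ (Finset.mem_univ i)
  refine le_exp_smul_mulVec_of_hasDerivAt_le
    (L0_offDiag_nonneg hσ.le (fun i => (hβ i).le) (fun i => (hx i).le) hS₀) ht
    (fun s hs => (hE s hs.1).finCons (hasDerivAt_pi.2 fun i => hI i s hs.1)) fun s hs => ?_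
  exact seir_rhs_le_L0_mulVec (fun i => (hβ i).le) hγmin_le (fun i => hInn i s hs.1) (hSle s hs.1)

/-- Componentwise comparison of SEIR solutions with the frozen linear
flow: if the nonnegative solution satisfies `S(t) ≤ S₀` for `t ≥ t₀`, then the
vector `V(t) = (E(t), I₁(t), …, I_N(t))` satisfies
`V(t) ≤ exp((t − t₀) L₀(S₀)) V(t₀)` componentwise for all `t ≥ t₀`. -/
theorem stmt_19
    (N : ℕ) [NeZero N]
    (σ : ℝ) (hσ : 0 < σ)
    (γ β x : Fin N → ℝ)
    (hγ : ∀ i, 0 < γ i) (hβ : ∀ i, 0 < β i) (hx : ∀ i, 0 < x i)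
    (hxsum : ∑ i, x i = 1)
    (γmin : ℝ) (hγmin : γmin = Finset.univ.inf' Finset.univ_nonempty γ)
    (S₀ : ℝ)
    (S E : ℝ → ℝ) (I : Fin N → ℝ → ℝ) (t₀ : ℝ)
    (hS : ∀ t ≥ t₀, HasDerivAt S (-(∑ i, β i * I i t) * S t) t)
    (hE : ∀ t ≥ t₀, HasDerivAt E ((∑ i, β i * I i t) * S t - σ * E t) t)
    (hI : ∀ i, ∀ t ≥ t₀, HasDerivAt (I i) (x i * σ * E t - γ i * I i t) t)
    (hSnn : ∀ t ≥ t₀, 0 ≤ S t) (hEnn : ∀ t ≥ t₀, 0 ≤ E t)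
    (hInn : ∀ i, ∀ t ≥ t₀, 0 ≤ I i t)
    (hSle : ∀ t ≥ t₀, S t ≤ S₀) :
    ∀ t ≥ t₀, ∀ j : Fin (N + 1),
      (Fin.cons (E t) (fun i => I i t) : Fin (N + 1) → ℝ) j
        ≤ (exp ((t - t₀) • L0 N σ γmin β x S₀)).mulVec
            (Fin.cons (E t₀) (fun i => I i t₀) : Fin (N + 1) → ℝ) j :=
  stmt_19_general N σ hσ γ β x hβ hx γmin hγmin S₀ S E I t₀ hE hI hSnn hInn hSle
end
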